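/- Let ω_max, k, T > 0 and μ ∈ (0,1). Let ω : ℝ → ℝ³ be continuous with |ω(t)| ≤ ω_max for all t, and let a : ℝ → ℝ³ be differentiable with |a(t)| = 1 and a'(t) = a(t) × ω(t) for all t. Assume the persistent excitation condition: for all t, (1/T)·∫_t^{t+T} [a(τ)]ₓᵀ[a(τ)]ₓ dτ ≥ μ·I. Define the 6×6 matrix A(t) with blocks A(t) = [[−I, [a(t)]ₓ],[[a(t)]ₓ, 0]]. Then there exists c ∈ (0,1), depending only on T, μ, k, ω_max, such that every solution Z : ℝ → ℝ⁶ of Z'(t) = k·A(t)·Z(t) satisfies |Z(t)|² ≤ c^N·|Z(t₀)|² for every integer N ≥ 0 and every t ∈ [t₀ + N·T, t₀ + (N+1)·T], for any initial time t₀ and initial condition Z(t₀). -/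

import Mathlib

open Matrix MeasureTheory intervalIntegral

noncomputable section

attribute [local instance] Matrix.normedAddCommGroup Matrix.normedSpace

/-- Cross product on ℝ³. -/
def cross3 (x y : Fin 3 → ℝ) : Fin 3 → ℝ :=
  ![x 1 * y 2 - x 2 * y 1, x 2 * y 0 - x 0 * y 2, x 0 * y 1 - x 1 * y 0]

/-- Euclidean norm on ℝ³. -/
def enorm3 (x : Fin 3 → ℝ) : ℝ := Real.sqrt (∑ i, (x i) ^ 2)

/-- Skew-symmetric cross-product matrix `[x]ₓ`. -/
def skew3 (x : Fin 3 → ℝ) : Matrix (Fin 3) (Fin 3) ℝ :=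
  !![0, -x 2, x 1; x 2, 0, -x 0; -x 1, x 0, 0]

/-- Persistent excitation condition with parameters `T, μ`. -/
def PE (a : ℝ → Fin 3 → ℝ) (T μ : ℝ) : Prop :=
  ∀ t : ℝ,
    ((T⁻¹ • ∫ τ in t..(t + T), (skew3 (a τ))ᵀ * skew3 (a τ)) -
      μ • (1 : Matrix (Fin 3) (Fin 3) ℝ)).PosSemidef

/-- Squared Euclidean norm on ℝ⁶ = ℝ³ × ℝ³. -/
def nrm6sq (Z : Fin 3 ⊕ Fin 3 → ℝ) : ℝ := ∑ i, (Z i) ^ 2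

/-- The 6×6 block matrix `A = [[−I, [a]ₓ], [[a]ₓ, 0]]`. -/
def Amat (a : Fin 3 → ℝ) : Matrix (Fin 3 ⊕ Fin 3) (Fin 3 ⊕ Fin 3) ℝ :=
  Matrix.fromBlocks (-1) (skew3 a) (skew3 a) 0

/-!
Write `Z = (p, q)`, so that `p' = k (a × q - p)` and `q' = k (a × p)`. The energy
`V = |p|² + |q|²` satisfies `V' = -2k |p|²`, so it suffices to find `ε > 0` with
`∫ₛ^{s+T} |p|² ≥ ε V(s)` on every period. If this fails, then `|p|²`, whose derivative is
`O(k V(s))`, stays below `θ² V(s)` on the whole period; hence `q` barely moves, and integrating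
`((a × q) · p)' = k |a × q|² + O(θ V(s))` shows that `∫ |a × q|²` is `O(θ V(s))`. Persistent
excitation applied to the almost constant vector `q(s)`, which carries almost all of the energy,
forbids this for small `θ`.
-/

open Set Filter Topology

lemma cross3_eq_crossProduct (x y : Fin 3 → ℝ) : cross3 x y = x ⨯₃ y := rfl

lemma enorm3_eq_sqrt (x : Fin 3 → ℝ) : enorm3 x = √(x ⬝ᵥ x) := by
  simp [enorm3, dotProduct, sq]

lemma skew3_mulVec (x y : Fin 3 → ℝ) : skew3 x *ᵥ y = x ⨯₃ y := by
  ext i; fin_cases i <;> simp [skew3, cross_apply, mulVec, dotProduct, Fin.sum_univ_three] <;> ring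

lemma Amat_mulVec (b : Fin 3 → ℝ) (z : Fin 3 ⊕ Fin 3 → ℝ) :
    Amat b *ᵥ z = Sum.elim (b ⨯₃ (z ∘ Sum.inr) - z ∘ Sum.inl) (b ⨯₃ (z ∘ Sum.inl)) := by
  simp [Amat, fromBlocks_mulVec, skew3_mulVec, neg_mulVec, neg_add_eq_sub]

lemma dotProduct_self_nonneg {n : Type*} [Fintype n] (v : n → ℝ) : 0 ≤ v ⬝ᵥ v := by
  simpa using dotProduct_self_star_nonneg v

lemma sq_dotProduct_le {n : Type*} [Fintype n] (u v : n → ℝ) :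
    (u ⬝ᵥ v) ^ 2 ≤ (u ⬝ᵥ u) * (v ⬝ᵥ v) := by
  simpa [dotProduct, sq] using Finset.sum_mul_sq_le_sq_mul_sq Finset.univ u v

lemma dotProduct_sub_self_le_two_mul_add {n : Type*} [Fintype n] (u v : n → ℝ) :
    (u - v) ⬝ᵥ (u - v) ≤ 2 * (u ⬝ᵥ u) + 2 * (v ⬝ᵥ v) := by
  have := dotProduct_self_nonneg (u + v)
  simp only [add_dotProduct, dotProduct_add, sub_dotProduct, dotProduct_sub,
    dotProduct_comm v u] at *
  linarith

lemma cross_dot_cross_self_le (u v : Fin 3 → ℝ) :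
    u ⨯₃ v ⬝ᵥ u ⨯₃ v ≤ (u ⬝ᵥ u) * (v ⬝ᵥ v) := by
  rw [cross_dot_cross, dotProduct_comm v u]
  nlinarith [sq_nonneg (u ⬝ᵥ v)]

lemma cross_dotProduct_add_cross_dotProduct (a u v : Fin 3 → ℝ) :
    a ⨯₃ u ⬝ᵥ v + a ⨯₃ v ⬝ᵥ u = 0 := by
  rw [dotProduct_comm (a ⨯₃ u) v, triple_product_permutation v a u, dotProduct_comm (a ⨯₃ v) u,
    triple_product_permutation u a v, ← cross_anticomm u v, dotProduct_neg, add_neg_cancel]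

lemma cross_cross_self_dotProduct (a p : Fin 3 → ℝ) :
    a ⨯₃ (a ⨯₃ p) ⬝ᵥ p = -(a ⨯₃ p ⬝ᵥ a ⨯₃ p) := by
  rw [dotProduct_comm, triple_product_permutation, triple_product_permutation,
    ← cross_anticomm a p, dotProduct_neg]

lemma abs_cross_dotProduct_le {b p q : Fin 3 → ℝ} {W θ V : ℝ} (hW : 0 ≤ W) (hθ : 0 ≤ θ)
    (hV : 0 ≤ V) (hb : b ⬝ᵥ b ≤ W ^ 2) (hq : q ⬝ᵥ q ≤ V) (hp : p ⬝ᵥ p ≤ θ ^ 2 * V) :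
    |b ⨯₃ q ⬝ᵥ p| ≤ W * θ * V := by
  refine abs_le_of_sq_le_sq ((sq_dotProduct_le _ _).trans ?_) (by positivity)
  calc _ ≤ W ^ 2 * V * (θ ^ 2 * V) :=
        mul_le_mul ((cross_dot_cross_self_le b q).trans
          (mul_le_mul hb hq (dotProduct_self_nonneg q) (sq_nonneg W)))
          hp (dotProduct_self_nonneg p) (by positivity)
    _ = (W * θ * V) ^ 2 := by ring

lemma sub_le_deriv_cross_dotProduct {a ω p q : Fin 3 → ℝ} {k W θ V : ℝ} (ha : a ⬝ᵥ a = 1)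
    (hω : ω ⬝ᵥ ω ≤ W ^ 2) (hk : 0 ≤ k) (hW : 0 ≤ W) (hθ0 : 0 ≤ θ) (hθ1 : θ ≤ 1) (hV : 0 ≤ V)
    (hq : q ⬝ᵥ q ≤ V) (hp : p ⬝ᵥ p ≤ θ ^ 2 * V) :
    k * (a ⨯₃ q ⬝ᵥ a ⨯₃ q) - θ * (W + 2 * k) * V ≤
      (a ⨯₃ ω) ⨯₃ q ⬝ᵥ p + k * (a ⨯₃ q ⬝ᵥ a ⨯₃ q) - k * (a ⨯₃ p ⬝ᵥ a ⨯₃ p)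
        - k * (a ⨯₃ q ⬝ᵥ p) := by
  have hD := abs_cross_dotProduct_le hW hθ0 hV
    ((cross_dot_cross_self_le a ω).trans_eq (by rw [ha, one_mul]) |>.trans hω) hq hp
  have hG := abs_cross_dotProduct_le (b := a) zero_le_one hθ0 hV (by rw [ha, one_pow]) hq hp
  have hap : a ⨯₃ p ⬝ᵥ a ⨯₃ p ≤ θ * V := by
    have := (cross_dot_cross_self_le a p).trans_eq (by rw [ha, one_mul])
    have : θ ^ 2 * V ≤ θ * V := mul_le_mul_of_nonneg_right (by nlinarith) hV
    linarith
  have := mul_le_mul_of_nonneg_left hap hk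
  have := mul_le_mul_of_nonneg_left (abs_le.1 hG).2 hk
  linarith [(abs_le.1 hD).1]

theorem Continuous.crossProduct {X : Type*} [TopologicalSpace X] {f g : X → Fin 3 → ℝ}
    (hf : Continuous f) (hg : Continuous g) : Continuous fun x => f x ⨯₃ g x :=
  continuous_pi fun i => by fin_cases i <;> simp [cross_apply] <;> fun_prop

theorem HasDerivAt.dotProduct {n : Type*} [Fintype n] {f g : ℝ → n → ℝ} {f' g' : n → ℝ} {t : ℝ}
    (hf : HasDerivAt f f' t) (hg : HasDerivAt g g' t) :
    HasDerivAt (fun t => f t ⬝ᵥ g t) (f' ⬝ᵥ g t + f t ⬝ᵥ g') t := by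
  refine (HasDerivAt.fun_sum (u := Finset.univ)
    fun i _ => (hasDerivAt_pi.1 hf i).mul (hasDerivAt_pi.1 hg i)).congr_deriv ?_
  rw [Finset.sum_add_distrib, _root_.dotProduct, _root_.dotProduct, add_comm]

theorem HasDerivAt.crossProduct {f g : ℝ → Fin 3 → ℝ} {f' g' : Fin 3 → ℝ} {t : ℝ}
    (hf : HasDerivAt f f' t) (hg : HasDerivAt g g' t) :
    HasDerivAt (fun t => f t ⨯₃ g t) (f' ⨯₃ g t + f t ⨯₃ g') t := by
  let B : (Fin 3 → ℝ) →L[ℝ] (Fin 3 → ℝ) →L[ℝ] (Fin 3 → ℝ) :=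
    LinearMap.toContinuousLinearMap
      (LinearMap.toContinuousLinearMap.toLinearMap ∘ₗ _root_.crossProduct)
  simpa [B, add_comm] using B.hasDerivAt_of_bilinear (fun _ => hf) (fun _ => hg)

lemma dotProduct_sub_self_le_of_hasDerivAt {n : Type*} [Fintype n] {f f' : ℝ → n → ℝ}
    {C s t : ℝ} (hst : s ≤ t) (hf : ∀ τ ∈ Icc s t, HasDerivAt f (f' τ) τ) (hC : 0 ≤ C)
    (hf' : ∀ τ ∈ Icc s t, f' τ ⬝ᵥ f' τ ≤ C ^ 2) :
    (f t - f s) ⬝ᵥ (f t - f s) ≤ (C * (t - s)) ^ 2 := by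
  -- the norm of `n → ℝ` is the sup norm, so apply the mean value inequality in `EuclideanSpace`
  let e := (EuclideanSpace.equiv n ℝ).symm
  have norm_sq (x : n → ℝ) : ‖e x‖ ^ 2 = x ⬝ᵥ x := by
    simp only [e, EuclideanSpace.real_norm_sq_eq]
    simp [dotProduct, sq]
  have hmvt : ‖e (f t) - e (f s)‖ ≤ C * (t - s) := by
    refine norm_image_sub_le_of_norm_deriv_le_segment' (f := fun τ => e (f τ))
      (f' := fun τ => e (f' τ))
      (fun τ hτ => (e.hasFDerivAt.comp_hasDerivAt τ (hf τ hτ)).hasDerivWithinAt)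
      (fun τ hτ => ?_) t ⟨hst, le_rfl⟩
    exact (le_abs_self _).trans
      (abs_le_of_sq_le_sq ((norm_sq _).trans_le (hf' τ (Ico_subset_Icc_self hτ))) hC)
  rw [← norm_sq, map_sub]
  exact pow_le_pow_left₀ (norm_nonneg _) hmvt 2

lemma LipschitzOnWith.mul_le_integral_add {f : ℝ → ℝ} {L : NNReal} {a b δ x : ℝ}
    (hf : LipschitzOnWith L f (Icc a b)) (hf0 : ∀ y ∈ Icc a b, 0 ≤ f y) (hδ : 0 < δ)
    (hδab : δ ≤ b - a) (hx : x ∈ Icc a b) :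
    f x * δ ≤ (∫ y in a..b, f y) + L * δ ^ 2 := by
  set u := min x (b - δ)
  have hu : a ≤ u := le_min hx.1 (by linarith)
  have hwin : Icc u (u + δ) ⊆ Icc a b :=
    Icc_subset_Icc hu (by linarith [min_le_right x (b - δ)])
  have hxu : x ∈ Icc u (u + δ) :=
    ⟨min_le_left _ _, by
      rw [← min_add_add_right, sub_add_cancel]; exact le_min (by linarith) hx.2⟩
  have hcont := hf.continuousOn
  have hlow : ∀ y ∈ Icc u (u + δ), f x - L * δ ≤ f y := by
    intro y hy
    have h1 := hf.dist_le_mul x (hwin hxu) y (hwin hy)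
    rw [Real.dist_eq, Real.dist_eq] at h1
    have h2 : |x - y| ≤ δ := abs_le.2 ⟨by linarith [hy.2, hxu.1], by linarith [hy.1, hxu.2]⟩
    have := abs_le.1 h1
    nlinarith [L.coe_nonneg]
  calc f x * δ = (f x - L * δ) * δ + L * δ ^ 2 := by ring
    _ ≤ (∫ y in u..u + δ, f y) + L * δ ^ 2 := by
      gcongr
      have := integral_mono_on (by linarith) (intervalIntegrable_const (μ := volume))
        ((hcont.mono hwin).intervalIntegrable_of_Icc (by linarith)) hlow
      rwa [intervalIntegral.integral_const, add_sub_cancel_left, smul_eq_mul, mul_comm] at this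
    _ ≤ (∫ y in a..b, f y) + L * δ ^ 2 := by
      gcongr
      exact integral_mono_interval hu (by linarith) (hwin ⟨by linarith, le_rfl⟩).2
        (ae_restrict_of_forall_mem measurableSet_Ioc fun y hy => hf0 y ⟨hy.1.le, hy.2⟩)
        (hcont.intervalIntegrable_of_Icc (by linarith))

lemma Antitone.le_pow_mul_of_le_mul {V : ℝ → ℝ} (hV : Antitone V) {c T : ℝ} (hc : 0 ≤ c)
    (hstep : ∀ s, V (s + T) ≤ c * V s) (t₀ : ℝ) (N : ℕ) {t : ℝ} (ht : t₀ + N * T ≤ t) :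
    V t ≤ c ^ N * V t₀ := by
  refine (hV ht).trans ?_
  clear ht
  induction N with
  | zero => simp
  | succ N ih =>
    calc V (t₀ + ↑(N + 1) * T) = V (t₀ + N * T + T) := by push_cast; ring_nf
      _ ≤ c * V (t₀ + N * T) := hstep _
      _ ≤ c * (c ^ N * V t₀) := mul_le_mul_of_nonneg_left ih hc
      _ = c ^ (N + 1) * V t₀ := by ring

lemma continuous_skew3_transpose_mul {a : ℝ → Fin 3 → ℝ} (ha : Continuous a) :
    Continuous fun τ => (skew3 (a τ))ᵀ * skew3 (a τ) := by
  have : Continuous fun τ => skew3 (a τ) := by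
    refine continuous_matrix fun i j => ?_
    fin_cases i <;> fin_cases j <;> simp [skew3] <;> fun_prop
  exact this.matrix_transpose.matrix_mul this

lemma PE.mul_dotProduct_le_integral {a : ℝ → Fin 3 → ℝ} {T μ : ℝ} (hPE : PE a T μ)
    (hT : 0 < T) (ha : Continuous a) (s : ℝ) (y : Fin 3 → ℝ) :
    μ * T * (y ⬝ᵥ y) ≤ ∫ τ in s..s + T, a τ ⨯₃ y ⬝ᵥ a τ ⨯₃ y := by
  let Q : Matrix (Fin 3) (Fin 3) ℝ →L[ℝ] ℝ := LinearMap.toContinuousLinearMap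
    { toFun M := y ⬝ᵥ M *ᵥ y
      map_add' M N := by simp [add_mulVec, dotProduct_add]
      map_smul' c M := by simp [smul_mulVec, dotProduct_smul] }
  have hQ : Q (∫ τ in s..s + T, (skew3 (a τ))ᵀ * skew3 (a τ)) =
      ∫ τ in s..s + T, a τ ⨯₃ y ⬝ᵥ a τ ⨯₃ y := by
    refine (Q.intervalIntegral_comp_comm
      ((continuous_skew3_transpose_mul ha).intervalIntegrable _ _)).symm.trans ?_
    congr 1 with τ
    change y ⬝ᵥ ((skew3 (a τ))ᵀ * skew3 (a τ)) *ᵥ y = _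
    rw [← mulVec_mulVec, dotProduct_mulVec, vecMul_transpose, skew3_mulVec, dotProduct_comm]
  have h := (hPE s).dotProduct_mulVec_nonneg y
  simp only [star_trivial, sub_mulVec, smul_mulVec, one_mulVec, dotProduct_sub, dotProduct_smul,
    smul_eq_mul] at h
  change 0 ≤ T⁻¹ * Q _ - μ * (y ⬝ᵥ y) at h
  rw [hQ, sub_nonneg, ← div_eq_inv_mul, le_div_iff₀ hT] at h
  linarith

structure IsSolution (k : ℝ) (a p q : ℝ → Fin 3 → ℝ) : Prop where
  hasDerivAt_fst : ∀ t, HasDerivAt p (k • (a t ⨯₃ q t - p t)) t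
  hasDerivAt_snd : ∀ t, HasDerivAt q (k • (a t ⨯₃ p t)) t

def energy (p q : ℝ → Fin 3 → ℝ) (t : ℝ) : ℝ := p t ⬝ᵥ p t + q t ⬝ᵥ q t

lemma energy_nonneg (p q : ℝ → Fin 3 → ℝ) (t : ℝ) : 0 ≤ energy p q t :=
  add_nonneg (dotProduct_self_nonneg _) (dotProduct_self_nonneg _)

lemma dotProduct_fst_self_le_energy (p q : ℝ → Fin 3 → ℝ) (t : ℝ) : p t ⬝ᵥ p t ≤ energy p q t :=
  le_add_of_nonneg_right (dotProduct_self_nonneg _)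

lemma dotProduct_snd_self_le_energy (p q : ℝ → Fin 3 → ℝ) (t : ℝ) : q t ⬝ᵥ q t ≤ energy p q t :=
  le_add_of_nonneg_left (dotProduct_self_nonneg _)

lemma isSolution_of_hasDerivAt_Amat {k : ℝ} {a : ℝ → Fin 3 → ℝ} {Z : ℝ → Fin 3 ⊕ Fin 3 → ℝ}
    (hZ : ∀ t, HasDerivAt Z (k • (Amat (a t)).mulVec (Z t)) t) :
    IsSolution k a (fun t => Z t ∘ Sum.inl) (fun t => Z t ∘ Sum.inr) where
  hasDerivAt_fst t := hasDerivAt_pi.2 fun i => by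
    simpa [Amat_mulVec] using hasDerivAt_pi.1 (hZ t) (Sum.inl i)
  hasDerivAt_snd t := hasDerivAt_pi.2 fun i => by
    simpa [Amat_mulVec] using hasDerivAt_pi.1 (hZ t) (Sum.inr i)

lemma nrm6sq_eq_energy (Z : ℝ → Fin 3 ⊕ Fin 3 → ℝ) (t : ℝ) :
    nrm6sq (Z t) = energy (fun t => Z t ∘ Sum.inl) (fun t => Z t ∘ Sum.inr) t := by
  simp [nrm6sq, energy, dotProduct, sq, Fintype.sum_sum_type]

namespace IsSolution

variable {k : ℝ} {a p q : ℝ → Fin 3 → ℝ}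

lemma continuous_fst (sol : IsSolution k a p q) : Continuous p :=
  continuous_iff_continuousAt.2 fun t => (sol.hasDerivAt_fst t).continuousAt

lemma continuous_snd (sol : IsSolution k a p q) : Continuous q :=
  continuous_iff_continuousAt.2 fun t => (sol.hasDerivAt_snd t).continuousAt

lemma hasDerivAt_dotProduct_fst_self (sol : IsSolution k a p q) (t : ℝ) :
    HasDerivAt (fun t => p t ⬝ᵥ p t) (2 * k * (a t ⨯₃ q t ⬝ᵥ p t - p t ⬝ᵥ p t)) t := by
  refine ((sol.hasDerivAt_fst t).dotProduct (sol.hasDerivAt_fst t)).congr_deriv ?_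
  simp only [smul_dotProduct, sub_dotProduct, smul_eq_mul, dotProduct_comm (p t)]
  ring

lemma hasDerivAt_energy (sol : IsSolution k a p q) (t : ℝ) :
    HasDerivAt (energy p q) (-(2 * k) * (p t ⬝ᵥ p t)) t := by
  refine ((sol.hasDerivAt_dotProduct_fst_self t).add
    ((sol.hasDerivAt_snd t).dotProduct (sol.hasDerivAt_snd t))).congr_deriv ?_
  simp only [smul_dotProduct, smul_eq_mul, dotProduct_comm (q t)]
  linear_combination 2 * k * cross_dotProduct_add_cross_dotProduct (a t) (q t) (p t)

lemma antitone_energy (sol : IsSolution k a p q) (hk : 0 ≤ k) : Antitone (energy p q) :=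
  antitone_of_deriv_nonpos (fun t => (sol.hasDerivAt_energy t).differentiableAt) fun t => by
    rw [(sol.hasDerivAt_energy t).deriv]
    nlinarith [dotProduct_self_nonneg (p t)]

lemma energy_add_eq (sol : IsSolution k a p q) (s T : ℝ) :
    energy p q (s + T) = energy p q s - 2 * k * ∫ τ in s..s + T, p τ ⬝ᵥ p τ := by
  have hp := sol.continuous_fst
  have := integral_eq_sub_of_hasDerivAt (fun τ _ => sol.hasDerivAt_energy τ)
    ((continuous_const.mul (hp.dotProduct hp)).intervalIntegrable s (s + T))
  rw [intervalIntegral.integral_const_mul] at this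
  linarith

lemma lipschitzOnWith_dotProduct_fst_self (sol : IsSolution k a p q)
    (ha : ∀ t, a t ⬝ᵥ a t = 1) (hk : 0 ≤ k) (s b : ℝ) :
    LipschitzOnWith (4 * k * energy p q s).toNNReal (fun t => p t ⬝ᵥ p t) (Icc s b) := by
  refine (convex_Icc s b).lipschitzOnWith_of_nnnorm_hasDerivWithin_le
    (fun t _ => (sol.hasDerivAt_dotProduct_fst_self t).hasDerivWithinAt) fun t ht => ?_
  have hV : energy p q t ≤ energy p q s := sol.antitone_energy hk ht.1
  have hp := dotProduct_fst_self_le_energy p q t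
  have hG := abs_cross_dotProduct_le (b := a t) zero_le_one zero_le_one (energy_nonneg p q t)
    (by rw [ha t, one_pow]) (dotProduct_snd_self_le_energy p q t) (by rwa [one_pow, one_mul])
  rw [← NNReal.coe_le_coe, coe_nnnorm,
    Real.coe_toNNReal _ (mul_nonneg (by positivity) (energy_nonneg p q s)),
    Real.norm_eq_abs, abs_mul, abs_of_nonneg (by positivity)]
  calc 2 * k * |a t ⨯₃ q t ⬝ᵥ p t - p t ⬝ᵥ p t|
      ≤ 2 * k * (|a t ⨯₃ q t ⬝ᵥ p t| + p t ⬝ᵥ p t) := by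
        gcongr
        simpa [abs_of_nonneg (dotProduct_self_nonneg (p t))] using
          abs_sub (a t ⨯₃ q t ⬝ᵥ p t) (p t ⬝ᵥ p t)
    _ ≤ 2 * k * (energy p q s + energy p q s) := by gcongr <;> linarith
    _ = 4 * k * energy p q s := by ring

lemma dotProduct_fst_self_le_of_integral_le (sol : IsSolution k a p q)
    (ha : ∀ t, a t ⬝ᵥ a t = 1) (hk : 0 ≤ k) {s T θ δ : ℝ} (hδ : 0 < δ) (hδT : δ ≤ T)
    (hkδ : 8 * k * δ ≤ θ ^ 2)
    (hE : ∫ τ in s..s + T, p τ ⬝ᵥ p τ ≤ θ ^ 2 * δ / 2 * energy p q s)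
    {τ : ℝ} (hτ : τ ∈ Icc s (s + T)) : p τ ⬝ᵥ p τ ≤ θ ^ 2 * energy p q s := by
  have hV := energy_nonneg p q s
  have h := (sol.lipschitzOnWith_dotProduct_fst_self ha hk s (s + T)).mul_le_integral_add
    (fun _ _ => dotProduct_self_nonneg _) hδ (by linarith) hτ
  rw [Real.coe_toNNReal _ (by positivity)] at h
  have : 4 * k * energy p q s * δ ^ 2 ≤ θ ^ 2 * δ / 2 * energy p q s := by
    nlinarith [mul_nonneg hδ.le hV]
  exact le_of_mul_le_mul_right (by nlinarith) hδ

lemma dotProduct_snd_sub_le (sol : IsSolution k a p q) (ha : ∀ t, a t ⬝ᵥ a t = 1)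
    (hk : 0 ≤ k) {s T θ : ℝ} (hθ : 0 ≤ θ)
    (hp : ∀ τ ∈ Icc s (s + T), p τ ⬝ᵥ p τ ≤ θ ^ 2 * energy p q s)
    {τ : ℝ} (hτ : τ ∈ Icc s (s + T)) :
    (q τ - q s) ⬝ᵥ (q τ - q s) ≤ (k * θ * T) ^ 2 * energy p q s := by
  have hV := energy_nonneg p q s
  have h := dotProduct_sub_self_le_of_hasDerivAt hτ.1 (fun r _ => sol.hasDerivAt_snd r)
    (C := k * θ * √(energy p q s)) (by positivity) fun r hr => by
      have hap : a r ⨯₃ p r ⬝ᵥ a r ⨯₃ p r ≤ p r ⬝ᵥ p r := by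
        simpa [ha r] using cross_dot_cross_self_le (a r) (p r)
      have := hp r ⟨hr.1, hr.2.trans hτ.2⟩
      rw [smul_dotProduct, dotProduct_smul, smul_eq_mul, smul_eq_mul, mul_pow, mul_pow,
        Real.sq_sqrt hV, ← mul_assoc, ← sq]
      nlinarith [sq_nonneg k]
  calc _ ≤ (k * θ * √(energy p q s) * (τ - s)) ^ 2 := h
    _ ≤ (k * θ * √(energy p q s) * T) ^ 2 := by
      gcongr
      · exact mul_nonneg (by positivity) (by linarith [hτ.1])
      · linarith [hτ.2]
    _ = (k * θ * T) ^ 2 * energy p q s := by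
      rw [mul_pow, mul_pow, mul_pow, mul_pow, Real.sq_sqrt hV]; ring

lemma hasDerivAt_cross_snd_dotProduct_fst (sol : IsSolution k a p q) {ω : ℝ → Fin 3 → ℝ}
    (had : ∀ t, HasDerivAt a (a t ⨯₃ ω t) t) (t : ℝ) :
    HasDerivAt (fun t => a t ⨯₃ q t ⬝ᵥ p t)
      ((a t ⨯₃ ω t) ⨯₃ q t ⬝ᵥ p t + k * (a t ⨯₃ q t ⬝ᵥ a t ⨯₃ q t)
        - k * (a t ⨯₃ p t ⬝ᵥ a t ⨯₃ p t) - k * (a t ⨯₃ q t ⬝ᵥ p t)) t := by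
  refine (((had t).crossProduct (sol.hasDerivAt_snd t)).dotProduct
    (sol.hasDerivAt_fst t)).congr_deriv ?_
  simp only [map_smul, add_dotProduct, smul_dotProduct, dotProduct_smul, dotProduct_sub,
    cross_cross_self_dotProduct, smul_eq_mul]
  ring

lemma integral_cross_snd_le (sol : IsSolution k a p q) (ha : ∀ t, a t ⬝ᵥ a t = 1)
    {ω : ℝ → Fin 3 → ℝ} (had : ∀ t, HasDerivAt a (a t ⨯₃ ω t) t) {W : ℝ} (hW : 0 ≤ W)
    (hω : ∀ t, ω t ⬝ᵥ ω t ≤ W ^ 2) (hk : 0 ≤ k) {s T θ : ℝ} (hT : 0 ≤ T) (hθ0 : 0 ≤ θ)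
    (hθ1 : θ ≤ 1) (hp : ∀ τ ∈ Icc s (s + T), p τ ⬝ᵥ p τ ≤ θ ^ 2 * energy p q s) :
    k * ∫ τ in s..s + T, a τ ⨯₃ q τ ⬝ᵥ a τ ⨯₃ q τ ≤
      θ * (2 + T * (W + 2 * k)) * energy p q s := by
  set V := energy p q s
  have hV := energy_nonneg p q s
  have hq (τ : ℝ) (hτ : τ ∈ Icc s (s + T)) : q τ ⬝ᵥ q τ ≤ V :=
    (dotProduct_snd_self_le_energy p q τ).trans (sol.antitone_energy hk hτ.1)
  have hG (τ : ℝ) (hτ : τ ∈ Icc s (s + T)) : |a τ ⨯₃ q τ ⬝ᵥ p τ| ≤ θ * V := by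
    simpa using abs_cross_dotProduct_le (b := a τ) zero_le_one hθ0 hV (by rw [ha τ, one_pow])
      (hq τ hτ) (hp τ hτ)
  have haq : Continuous fun τ => a τ ⨯₃ q τ ⬝ᵥ a τ ⨯₃ q τ := by
    have := (continuous_iff_continuousAt.2 fun t => (had t).continuousAt).crossProduct
      sol.continuous_snd
    exact this.dotProduct this
  have hint := integral_le_sub_of_hasDeriv_right_of_le (by linarith)
    (φ := fun τ => k * (a τ ⨯₃ q τ ⬝ᵥ a τ ⨯₃ q τ) - θ * (W + 2 * k) * V)
    (fun τ _ => (sol.hasDerivAt_cross_snd_dotProduct_fst had τ).continuousAt.continuousWithinAt)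
    (fun τ _ => (sol.hasDerivAt_cross_snd_dotProduct_fst had τ).hasDerivWithinAt)
    ((continuous_const.mul haq).sub continuous_const).integrableOn_Icc
    fun τ hτ => sub_le_deriv_cross_dotProduct (ha τ) (hω τ) hk hW hθ0 hθ1 hV
      (hq τ (Ioo_subset_Icc_self hτ)) (hp τ (Ioo_subset_Icc_self hτ))
  rw [intervalIntegral.integral_sub ((haq.intervalIntegrable _ _).const_mul k)
    intervalIntegrable_const, intervalIntegral.integral_const_mul,
    intervalIntegral.integral_const, add_sub_cancel_left, smul_eq_mul] at hint
  have := abs_le.1 (hG (s + T) ⟨by linarith, le_rfl⟩)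
  have := abs_le.1 (hG s ⟨le_rfl, by linarith⟩)
  linarith

lemma integral_cross_snd_start_le (sol : IsSolution k a p q) (ha : ∀ t, a t ⬝ᵥ a t = 1)
    (hac : Continuous a) (hk : 0 ≤ k) {s T θ : ℝ} (hT : 0 ≤ T) (hθ : 0 ≤ θ)
    (hp : ∀ τ ∈ Icc s (s + T), p τ ⬝ᵥ p τ ≤ θ ^ 2 * energy p q s) :
    ∫ τ in s..s + T, a τ ⨯₃ q s ⬝ᵥ a τ ⨯₃ q s ≤
      2 * (∫ τ in s..s + T, a τ ⨯₃ q τ ⬝ᵥ a τ ⨯₃ q τ) +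
        2 * T * ((k * θ * T) ^ 2 * energy p q s) := by
  set B := (k * θ * T) ^ 2 * energy p q s
  have hcq : Continuous fun τ => a τ ⨯₃ q τ := hac.crossProduct sol.continuous_snd
  have hcs : Continuous fun τ => a τ ⨯₃ q s := hac.crossProduct continuous_const
  have hiq : IntervalIntegrable (fun τ => 2 * (a τ ⨯₃ q τ ⬝ᵥ a τ ⨯₃ q τ)) volume s (s + T) :=
    ((hcq.dotProduct hcq).intervalIntegrable _ _).const_mul 2
  have hle (τ : ℝ) (hτ : τ ∈ Icc s (s + T)) :
      a τ ⨯₃ q s ⬝ᵥ a τ ⨯₃ q s ≤ 2 * (a τ ⨯₃ q τ ⬝ᵥ a τ ⨯₃ q τ) + 2 * B := by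
    have hsplit : a τ ⨯₃ q s = a τ ⨯₃ q τ - a τ ⨯₃ (q τ - q s) := by
      rw [map_sub, sub_sub_cancel]
    have hd := (cross_dot_cross_self_le (a τ) (q τ - q s)).trans_eq (by rw [ha τ, one_mul])
    rw [hsplit]
    linarith [dotProduct_sub_self_le_two_mul_add (a τ ⨯₃ q τ) (a τ ⨯₃ (q τ - q s)),
      sol.dotProduct_snd_sub_le ha hk hθ hp hτ]
  calc _ ≤ ∫ τ in s..s + T, (2 * (a τ ⨯₃ q τ ⬝ᵥ a τ ⨯₃ q τ) + 2 * B) :=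
        integral_mono_on (by linarith) ((hcs.dotProduct hcs).intervalIntegrable _ _)
          (hiq.add intervalIntegrable_const) hle
    _ = _ := by
      rw [intervalIntegral.integral_add hiq intervalIntegrable_const,
        intervalIntegral.integral_const_mul, intervalIntegral.integral_const, add_sub_cancel_left,
        smul_eq_mul]
      ring

lemma integral_dotProduct_fst_self_ge (sol : IsSolution k a p q) (ha : ∀ t, a t ⬝ᵥ a t = 1)
    {ω : ℝ → Fin 3 → ℝ} (had : ∀ t, HasDerivAt a (a t ⨯₃ ω t) t) {W : ℝ} (hW : 0 ≤ W)
    (hω : ∀ t, ω t ⬝ᵥ ω t ≤ W ^ 2) {T μ : ℝ} (hPE : PE a T μ) (hk : 0 < k) (hT : 0 < T)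
    {θ δ : ℝ} (hθ0 : 0 < θ) (hθ1 : θ ≤ 1 / 2)
    (hθK : 2 * θ * (2 + T * (W + 2 * k)) ≤ k * μ * T / 4)
    (hθT : 2 * k ^ 2 * θ ^ 2 * T ^ 3 ≤ μ * T / 4)
    (hδ : 0 < δ) (hδT : δ ≤ T) (hkδ : 8 * k * δ ≤ θ ^ 2) (s : ℝ) :
    θ ^ 2 * δ / 2 * energy p q s ≤ ∫ τ in s..s + T, p τ ⬝ᵥ p τ := by
  by_contra! hE
  set V := energy p q s
  have hV : 0 < V := by
    have := intervalIntegral.integral_nonneg (μ := volume) (by linarith : s ≤ s + T)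
      fun τ _ => dotProduct_self_nonneg (p τ)
    exact pos_of_mul_pos_right (this.trans_lt hE) (by positivity)
  have hac : Continuous a := continuous_iff_continuousAt.2 fun t => (had t).continuousAt
  have hp (τ : ℝ) (hτ : τ ∈ Icc s (s + T)) :=
    sol.dotProduct_fst_self_le_of_integral_le ha hk.le hδ hδT hkδ hE.le hτ
  have hPEs := hPE.mul_dotProduct_le_integral hT hac s (q s)
  have hleft := sol.integral_cross_snd_start_le ha hac hk.le hT.le hθ0.le hp
  have hright := sol.integral_cross_snd_le ha had hW hω hk.le hT.le hθ0.le (by linarith) hp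
  have hqs : 3 / 4 * V ≤ q s ⬝ᵥ q s := by
    have hps := hp s ⟨le_rfl, by linarith⟩
    have : θ ^ 2 * V ≤ 1 / 4 * V := mul_le_mul_of_nonneg_right (by nlinarith) hV.le
    have hVeq : V = p s ⬝ᵥ p s + q s ⬝ᵥ q s := rfl
    linarith
  have hK : 0 < 2 + T * (W + 2 * k) := by positivity
  have hkμT : 0 < k * μ * T := by nlinarith
  have h1 := mul_le_mul_of_nonneg_left (hPEs.trans hleft) hk.le
  have h2 := mul_le_mul_of_nonneg_left hqs hkμT.le
  have h3 := mul_le_mul_of_nonneg_right hθK hV.le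
  have h4 := mul_le_mul_of_nonneg_right (mul_le_mul_of_nonneg_left hθT hk.le) hV.le
  linarith [mul_pos hkμT hV]

end IsSolution

lemma exists_pos_small_parameter {k T μ K : ℝ} (hk : 0 < k) (hT : 0 < T) (hμ : 0 < μ) :
    ∃ θ, 0 < θ ∧ θ ≤ 1 / 2 ∧ 2 * θ * K ≤ k * μ * T / 4 ∧
      2 * k ^ 2 * θ ^ 2 * T ^ 3 ≤ μ * T / 4 := by
  have hsmall : ∀ᶠ θ in 𝓝 (0 : ℝ),
      θ < 1 / 2 ∧ 2 * θ * K < k * μ * T / 4 ∧ 2 * k ^ 2 * θ ^ 2 * T ^ 3 < μ * T / 4 :=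
    (eventually_lt_nhds (by norm_num)).and
      ((ContinuousAt.eventually_lt (by fun_prop) (by fun_prop) (by simp; positivity)).and
        (ContinuousAt.eventually_lt (by fun_prop) (by fun_prop) (by simp; positivity)))
  obtain ⟨θ, ⟨h1, h2, h3⟩, h0⟩ := ((hsmall.filter_mono nhdsWithin_le_nhds).and
    (self_mem_nhdsWithin : Ioi (0 : ℝ) ∈ 𝓝[>] 0)).exists
  exact ⟨θ, h0, h1.le, h2.le, h3.le⟩

lemma exists_energy_add_period_le_mul {a ω : ℝ → Fin 3 → ℝ} {k T μ W : ℝ}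
    (ha : ∀ t, a t ⬝ᵥ a t = 1) (had : ∀ t, HasDerivAt a (a t ⨯₃ ω t) t) (hW : 0 ≤ W)
    (hω : ∀ t, ω t ⬝ᵥ ω t ≤ W ^ 2) (hPE : PE a T μ) (hk : 0 < k) (hT : 0 < T) (hμ : 0 < μ) :
    ∃ c, 0 < c ∧ c < 1 ∧ ∀ p q, IsSolution k a p q →
      ∀ s, energy p q (s + T) ≤ c * energy p q s := by
  obtain ⟨θ, hθ0, hθ1, hθK, hθT⟩ :=
    exists_pos_small_parameter (K := 2 + T * (W + 2 * k)) hk hT hμ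
  set δ := min T (θ ^ 2 / (8 * k))
  have hδ : 0 < δ := lt_min hT (by positivity)
  have hkδ : 8 * k * δ ≤ θ ^ 2 := by
    have := min_le_right T (θ ^ 2 / (8 * k))
    rw [le_div_iff₀ (by positivity)] at this
    linarith
  have hrate : k * θ ^ 2 * δ < 1 := by
    have : θ ^ 2 ≤ 1 / 4 := by nlinarith
    nlinarith [mul_le_mul_of_nonneg_left hkδ (sq_nonneg θ)]
  refine ⟨1 - k * θ ^ 2 * δ, by linarith, by linarith [show 0 < k * θ ^ 2 * δ by positivity],
    fun p q sol s => ?_⟩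
  have := sol.integral_dotProduct_fst_self_ge ha had hW hω hPE hk hT hθ0 hθ1 hθK hθT hδ
    (min_le_left _ _) hkδ s
  rw [sol.energy_add_eq]
  linarith [mul_le_mul_of_nonneg_left this (by positivity : (0 : ℝ) ≤ 2 * k)]

theorem ltv_exponential_stability
    (ωmax k T μ : ℝ) (hk : 0 < k) (hT : 0 < T)
    (hμ0 : 0 < μ)
    (ω : ℝ → Fin 3 → ℝ) (hωb : ∀ t, enorm3 (ω t) ≤ ωmax)
    (a : ℝ → Fin 3 → ℝ) (hau : ∀ t, enorm3 (a t) = 1)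
    (had : ∀ t, HasDerivAt a (cross3 (a t) (ω t)) t)
    (hPE : PE a T μ) :
    ∃ c : ℝ, 0 < c ∧ c < 1 ∧
      ∀ Z : ℝ → Fin 3 ⊕ Fin 3 → ℝ,
        (∀ t, HasDerivAt Z (k • (Amat (a t)).mulVec (Z t)) t) →
        ∀ (t₀ : ℝ) (N : ℕ), ∀ t ∈ Set.Icc (t₀ + N * T) (t₀ + (N + 1) * T),
          nrm6sq (Z t) ≤ c ^ N * nrm6sq (Z t₀) := by
  simp only [enorm3_eq_sqrt, Real.sqrt_eq_one, Real.sqrt_le_iff] at hau hωb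
  simp only [cross3_eq_crossProduct] at had
  obtain ⟨c, hc0, hc1, hstep⟩ := exists_energy_add_period_le_mul hau had (hωb 0).1
    (fun t => (hωb t).2) hPE hk hT hμ0
  refine ⟨c, hc0, hc1, fun Z hZ t₀ N t ht => ?_⟩
  have sol := isSolution_of_hasDerivAt_Amat hZ
  rw [nrm6sq_eq_energy, nrm6sq_eq_energy]
  exact (sol.antitone_energy hk.le).le_pow_mul_of_le_mul hc0.le (hstep _ _ sol) t₀ N ht.1

end
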